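/- arXiv:2401.03714 — 3 statements merged into one kernel-verified Lean document; each statement's English description precedes it below -/
import Mathlib

section
/- Let u_K, u_L ∈ ℝ with jump j := u_L − u_K ≠ 0, let g_K, g_L ∈ co{0, j} be minmod-admissible slopes, set r⁻ := u_K + g_K/2, r⁺ := u_L − g_L/2, and let D := (f^EC(u_K, u_L) − f^God(r⁻, r⁺)) / j. Let ν ≥ 0, let g ∈ co{0, j}, and let r ∈ ℝ with |r| ≤ max(|u_K|, |u_L|). Define D_σ := D + ν·r²·g/j. Then j/24 ≤ D_σ ≤ (1/12)·|j| + (7/8)·max(|u_K|, |u_L|) + ν·max(u_K², u_L²). Moreover, for any ĵ ≠ 0 and any ĝ ∈ co{0, ĵ}, the cross-coefficient D̂ := ν·r²·ĝ/ĵ satisfies 0 ≤ D̂ ≤ ν·max(u_K², u_L²). -/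
/-- Second-order entropy-conservative numerical flux for the Burgers equation. -/
noncomputable def fEC (a b : ℝ) : ℝ := (1/24) * (12 * ((a + b)/2)^2 + (b - a)^2)

/-- Godunov flux for the Burgers equation. -/
noncomputable def fGod (a b : ℝ) : ℝ := (1/2) * max ((max a 0)^2) ((min b 0)^2)

/-! With `s = (uK + uL) / 2` one has `fEC uK uL = s² / 2 + j² / 24`, so
`D = j / 24 + (s² / 2 - fGod r⁻ r⁺) / j`. The reconstructed states lie on either side of `s`, so
the Godunov flux is the maximum of `u² / 2` between them for a shock (`j < 0`) and the minimum
for a rarefaction (`j > 0`); this makes the second term nonnegative. Since the Godunov flux equals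
`c² / 2` for a state `c` between `uK` and `uL`, the same term is at most
`|c - s| |c + s| / (2 |j|)`, where `|c - s| ≤ |j| / 2` and `|c + s| ≤ 2 max |uK| |uL|`.
The `ν`-terms are `ν r²` times a ratio in `[0, 1]`, and `r² ≤ max uK² uL²`. -/

open Set

lemma div_mem_Icc_zero_one_of_mem_uIcc {j g : ℝ} (hj : j ≠ 0) (hg : g ∈ uIcc 0 j) :
    g / j ∈ Icc 0 1 := by
  rcases mem_uIcc.mp hg with ⟨h0, hgj⟩ | ⟨hjg, h0⟩
  · have hj_pos : 0 < j := lt_of_le_of_ne (h0.trans hgj) (Ne.symm hj)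
    exact ⟨div_nonneg h0 hj_pos.le, (div_le_one hj_pos).mpr hgj⟩
  · have hj_neg : j < 0 := lt_of_le_of_ne (hjg.trans h0) hj
    exact ⟨div_nonneg_of_nonpos h0 hj_neg.le, (div_le_one_of_neg hj_neg).mpr hjg⟩

lemma sq_le_max_sq_of_abs_le {r a b : ℝ} (hr : |r| ≤ max |a| |b|) :
    r ^ 2 ≤ max (a ^ 2) (b ^ 2) := by
  rcases le_max_iff.mp hr with h | h
  · exact (sq_le_sq.mpr h).trans (le_max_left _ _)
  · exact (sq_le_sq.mpr h).trans (le_max_right _ _)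

lemma abs_sq_sub_sq_midpoint_le {a b c : ℝ} (hc : c ∈ uIcc a b) :
    |c ^ 2 - ((a + b) / 2) ^ 2| ≤ |b - a| / 2 * (2 * max |a| |b|) := by
  have hc_abs : |c| ≤ max |a| |b| := by
    rcases mem_uIcc.mp hc with ⟨h₁, h₂⟩ | ⟨h₁, h₂⟩
    · exact abs_le_max_abs_abs h₁ h₂
    · exact max_comm |b| |a| ▸ abs_le_max_abs_abs h₁ h₂
  have hdist : |c - (a + b) / 2| ≤ |b - a| / 2 := by
    rcases mem_uIcc.mp hc with ⟨h₁, h₂⟩ | ⟨h₁, h₂⟩ <;>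
      rw [abs_le] <;> constructor <;> cases abs_cases (b - a) <;> linarith
  have hsum : |c + (a + b) / 2| ≤ 2 * max |a| |b| := by
    have hab : |(a + b) / 2| ≤ max |a| |b| := by
      rw [abs_div, abs_two, div_le_iff₀ two_pos]
      linarith [abs_add_le a b, le_max_left |a| |b|, le_max_right |a| |b|]
    linarith [abs_add_le c ((a + b) / 2)]
  calc |c ^ 2 - ((a + b) / 2) ^ 2| = |c - (a + b) / 2| * |c + (a + b) / 2| := by
        rw [← abs_mul]; ring_nf
    _ ≤ |b - a| / 2 * (2 * max |a| |b|) :=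
        mul_le_mul hdist hsum (abs_nonneg _) (by positivity)

lemma cross_coefficient_mem_Icc {ν r M j g : ℝ} (hν : 0 ≤ ν) (hr : r ^ 2 ≤ M) (hj : j ≠ 0)
    (hg : g ∈ uIcc 0 j) : 0 ≤ ν * r ^ 2 * g / j ∧ ν * r ^ 2 * g / j ≤ ν * M := by
  obtain ⟨hq₀, hq₁⟩ := div_mem_Icc_zero_one_of_mem_uIcc hj hg
  have hνr : 0 ≤ ν * r ^ 2 := mul_nonneg hν (sq_nonneg r)
  rw [mul_div_assoc]
  refine ⟨mul_nonneg hνr hq₀, ?_⟩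
  calc ν * r ^ 2 * (g / j) ≤ ν * r ^ 2 := mul_le_of_le_one_right hνr hq₁
    _ ≤ ν * M := mul_le_mul_of_nonneg_left hr hν

lemma fEC_eq_sq_midpoint_add (a b : ℝ) : fEC a b = ((a + b) / 2) ^ 2 / 2 + (b - a) ^ 2 / 24 := by
  rw [fEC]; ring

lemma exists_mem_uIcc_fGod_eq (a b : ℝ) : ∃ c ∈ uIcc a b, fGod a b = c ^ 2 / 2 := by
  unfold fGod
  rcases le_total 0 a with ha | ha <;> rcases le_total 0 b with hb | hb
  · exact ⟨a, left_mem_uIcc, by simp [ha, hb]; ring⟩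
  · rcases le_total (b ^ 2) (a ^ 2) with h | h
    · exact ⟨a, left_mem_uIcc, by simp [ha, hb, h]; ring⟩
    · exact ⟨b, right_mem_uIcc, by simp [ha, hb, h]; ring⟩
  · exact ⟨0, mem_uIcc.mpr (Or.inl ⟨ha, hb⟩), by simp [ha, hb]⟩
  · exact ⟨b, right_mem_uIcc, by simp [ha, hb, sq_nonneg]; ring⟩

lemma fGod_le_of_mem_Icc {a b x : ℝ} (hx : x ∈ Icc a b) : fGod a b ≤ x ^ 2 / 2 := by
  obtain ⟨hax, hxb⟩ := hx
  have hl : max a 0 ^ 2 ≤ x ^ 2 := by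
    rcases le_total a 0 with ha | ha
    · simp [ha, sq_nonneg]
    · rw [max_eq_left ha]; nlinarith
  have hr : min b 0 ^ 2 ≤ x ^ 2 := by
    rcases le_total 0 b with hb | hb
    · simp [hb, sq_nonneg]
    · rw [min_eq_left hb]; nlinarith
  unfold fGod
  linarith [max_le hl hr]

lemma le_fGod_of_mem_Icc {a b x : ℝ} (hx : x ∈ Icc b a) : x ^ 2 / 2 ≤ fGod a b := by
  obtain ⟨hbx, hxa⟩ := hx
  have hx_sq : x ^ 2 ≤ max (max a 0 ^ 2) (min b 0 ^ 2) := by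
    rcases le_total 0 x with h | h
    · exact le_max_of_le_left (by rw [max_eq_left (h.trans hxa)]; nlinarith)
    · exact le_max_of_le_right (by rw [min_eq_left (hbx.trans h)]; nlinarith)
  unfold fGod
  linarith

section GodunovDissipation

variable {uK uL rm rp : ℝ} (hrm : rm ∈ uIcc uK ((uK + uL) / 2))
  (hrp : rp ∈ uIcc ((uK + uL) / 2) uL)
include hrm hrp

lemma godunov_dissipation_nonneg :
    0 ≤ (((uK + uL) / 2) ^ 2 / 2 - fGod rm rp) / (uL - uK) := by
  rcases le_total uK uL with h | h
  · rw [uIcc_of_le (by linarith)] at hrm hrp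
    have hx : (uK + uL) / 2 ∈ Icc rm rp := ⟨hrm.2, hrp.1⟩
    exact div_nonneg (by linarith [fGod_le_of_mem_Icc hx]) (by linarith)
  · rw [uIcc_of_ge (by linarith)] at hrm hrp
    have hx : (uK + uL) / 2 ∈ Icc rp rm := ⟨hrp.2, hrm.1⟩
    exact div_nonneg_of_nonpos (by linarith [le_fGod_of_mem_Icc hx]) (by linarith)

lemma godunov_dissipation_le (hne : uK ≠ uL) :
    (((uK + uL) / 2) ^ 2 / 2 - fGod rm rp) / (uL - uK) ≤ max |uK| |uL| / 2 := by
  obtain ⟨c, hc, hfc⟩ := exists_mem_uIcc_fGod_eq rm rp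
  have hmid : (uK + uL) / 2 ∈ uIcc uK uL := by
    rcases le_total uK uL with h | h
    · exact mem_uIcc_of_le (by linarith) (by linarith)
    · exact mem_uIcc_of_ge (by linarith) (by linarith)
  have hc' : c ∈ uIcc uK uL :=
    uIcc_subset_uIcc (uIcc_subset_uIcc left_mem_uIcc hmid hrm)
      (uIcc_subset_uIcc hmid right_mem_uIcc hrp) hc
  have hj : 0 < |uL - uK| := abs_pos.mpr (sub_ne_zero.mpr (Ne.symm hne))
  have hbound := abs_sq_sub_sq_midpoint_le hc'
  calc (((uK + uL) / 2) ^ 2 / 2 - fGod rm rp) / (uL - uK)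
      ≤ |((uK + uL) / 2) ^ 2 / 2 - fGod rm rp| / |uL - uK| := by
        rw [← abs_div]; exact le_abs_self _
    _ ≤ max |uK| |uL| / 2 := by
        rw [div_le_iff₀ hj, hfc, abs_sub_comm, ← sub_div, abs_div, abs_two]
        linarith

end GodunovDissipation

theorem stmt_7 (uK uL j : ℝ) (hj : j = uL - uK) (hjne : j ≠ 0)
    (gK gL : ℝ)
    (hgK : gK ∈ Set.Icc (min 0 j) (max 0 j))
    (hgL : gL ∈ Set.Icc (min 0 j) (max 0 j))
    (rm rp : ℝ) (hrm : rm = uK + gK / 2) (hrp : rp = uL - gL / 2)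
    (D : ℝ) (hD : D = (fEC uK uL - fGod rm rp) / j)
    (ν : ℝ) (hν : 0 ≤ ν)
    (g : ℝ) (hg : g ∈ Set.Icc (min 0 j) (max 0 j))
    (r : ℝ) (hr : |r| ≤ max |uK| |uL|)
    (Dσ : ℝ) (hDσ : Dσ = D + ν * r^2 * g / j) :
    (j / 24 ≤ Dσ ∧
      Dσ ≤ (1/12) * |j| + (7/8) * max |uK| |uL| + ν * max (uK^2) (uL^2)) ∧
    ∀ jhat : ℝ, jhat ≠ 0 → ∀ ghat ∈ Set.Icc (min 0 jhat) (max 0 jhat),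
      0 ≤ ν * r^2 * ghat / jhat ∧ ν * r^2 * ghat / jhat ≤ ν * max (uK^2) (uL^2) := by
  have hcross (jhat : ℝ) (hjhat : jhat ≠ 0) (ghat : ℝ) (hghat : ghat ∈ uIcc 0 jhat) :=
    cross_coefficient_mem_Icc hν (sq_le_max_sq_of_abs_le hr) hjhat hghat
  have hrm' : rm ∈ uIcc uK ((uK + uL) / 2) := by
    rcases mem_uIcc.mp hgK with ⟨h₁, h₂⟩ | ⟨h₁, h₂⟩
    exacts [mem_uIcc_of_le (by linarith) (by linarith), mem_uIcc_of_ge (by linarith) (by linarith)]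
  have hrp' : rp ∈ uIcc ((uK + uL) / 2) uL := by
    rcases mem_uIcc.mp hgL with ⟨h₁, h₂⟩ | ⟨h₁, h₂⟩
    exacts [mem_uIcc_of_le (by linarith) (by linarith), mem_uIcc_of_ge (by linarith) (by linarith)]
  have hD_eq : D = j / 24 + (((uK + uL) / 2) ^ 2 / 2 - fGod rm rp) / (uL - uK) := by
    rw [hD, fEC_eq_sq_midpoint_add, ← hj]; field_simp; ring
  have hD_lo := godunov_dissipation_nonneg hrm' hrp'
  have hD_hi := godunov_dissipation_le hrm' hrp' (fun h => hjne (by rw [hj, h, sub_self]))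
  obtain ⟨hσ_lo, hσ_hi⟩ := hcross j hjne g hg
  have hm : 0 ≤ max |uK| |uL| := le_max_of_le_left (abs_nonneg uK)
  rw [hDσ, hD_eq]
  exact ⟨⟨by linarith, by linarith [le_abs_self j, abs_nonneg j]⟩, hcross⟩
end

section
/- Let r⁻, r⁺ ∈ ℝ, a := (r⁻ + r⁺)/2, j := r⁺ − r⁻. Then: (i) if (j < 0 and a > 0) or (0 < r⁻ ≤ r⁺), then f^EC(r⁻, r⁺) − f^God(r⁻, r⁺) = ((6a − j)/12)·j; (ii) if (j < 0 and a ≤ 0) or (r⁻ ≤ r⁺ < 0), then f^EC(r⁻, r⁺) − f^God(r⁻, r⁺) = (−(6a + j)/12)·j; (iii) if r⁻ ≤ 0 ≤ r⁺, then f^EC(r⁻, r⁺) − f^God(r⁻, r⁺) = (12a² + j²)/24. -/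
lemma fEC_eq (a b : ℝ) : fEC a b = (a ^ 2 + a * b + b ^ 2) / 6 := by
  unfold fEC
  ring

lemma fGod_eq_left {a b : ℝ} (ha : 0 ≤ a) (hab : -a ≤ b) : fGod a b = a ^ 2 / 2 := by
  have hmin : min b 0 ^ 2 ≤ a ^ 2 :=
    sq_le_sq' (le_min hab (by linarith)) ((min_le_right b 0).trans ha)
  rw [fGod, max_eq_left ha, max_eq_left hmin]
  ring

lemma fGod_eq_right {a b : ℝ} (hb : b ≤ 0) (hab : b ≤ -a) : fGod a b = b ^ 2 / 2 := by
  have hmax : max a 0 ^ 2 ≤ b ^ 2 := by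
    rw [← neg_sq b]
    exact sq_le_sq' (by linarith [le_max_right a 0]) (max_le (by linarith) (by linarith))
  rw [fGod, min_eq_left hb, max_eq_right hmax]
  ring

lemma fGod_eq_zero {a b : ℝ} (ha : a ≤ 0) (hb : 0 ≤ b) : fGod a b = 0 := by
  simp [fGod, max_eq_right ha, min_eq_right hb]

theorem stmt_10 (rm rp a j : ℝ) (ha : a = (rm + rp)/2) (hj : j = rp - rm) :
    (((j < 0 ∧ 0 < a) ∨ (0 < rm ∧ rm ≤ rp)) →
      fEC rm rp - fGod rm rp = ((6 * a - j)/12) * j) ∧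
    (((j < 0 ∧ a ≤ 0) ∨ (rm ≤ rp ∧ rp < 0)) →
      fEC rm rp - fGod rm rp = (-(6 * a + j)/12) * j) ∧
    ((rm ≤ 0 ∧ 0 ≤ rp) →
      fEC rm rp - fGod rm rp = (12 * a^2 + j^2)/24) := by
  subst ha hj
  refine ⟨fun h => ?_, fun h => ?_, fun ⟨hrm, hrp⟩ => ?_⟩
  · have hrm : 0 ≤ rm := by rcases h with ⟨_, _⟩ | ⟨_, _⟩ <;> linarith
    have hsum : -rm ≤ rp := by rcases h with ⟨_, _⟩ | ⟨_, _⟩ <;> linarith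
    rw [fEC_eq, fGod_eq_left hrm hsum]
    ring
  · have hrp : rp ≤ 0 := by rcases h with ⟨_, _⟩ | ⟨_, _⟩ <;> linarith
    have hsum : rp ≤ -rm := by rcases h with ⟨_, _⟩ | ⟨_, _⟩ <;> linarith
    rw [fEC_eq, fGod_eq_right hrp hsum]
    ring
  · rw [fEC_eq, fGod_eq_zero hrm hrp]
    ring
end

section
/- Let u_K, u_L ∈ ℝ with u_K > u_L, set j := u_L − u_K < 0, and choose the minmod-admissible slopes g_K = g_L = j (which lie in co{0, j}). Then the reconstructed interface values coincide, r⁻ = r⁺ = (u_K + u_L)/2, the Godunov flux of the reconstructed data equals f((u_K+u_L)/2), and the entropy-dissipation coefficient D := (f^EC(u_K, u_L) − f^God(r⁻, r⁺))/j equals j/24 < 0. In particular, the second-order finite volume flux based on the Riemann-problem solver with minmod reconstruction is not entropy stable. -/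
lemma fGod_self (m : ℝ) : fGod m m = m ^ 2 / 2 := by
  unfold fGod
  rcases le_total 0 m with h | h
  · rw [max_eq_left h, min_eq_right h, max_eq_left (by simpa using sq_nonneg m)]
    ring
  · rw [max_eq_right h, min_eq_left h, max_eq_right (by simpa using sq_nonneg m)]
    ring

lemma fEC_sub_fGod_midpoint (a b : ℝ) :
    fEC a b - fGod ((a + b) / 2) ((a + b) / 2) = (b - a) ^ 2 / 24 := by
  rw [fGod_self, fEC]
  ring

theorem stmt_14 (uK uL j : ℝ) (huKL : uK > uL) (hj : j = uL - uK)
    (gK gL : ℝ) (hgK : gK = j) (hgL : gL = j)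
    (rm rp : ℝ) (hrm : rm = uK + gK / 2) (hrp : rp = uL - gL / 2)
    (D : ℝ) (hD : D = (fEC uK uL - fGod rm rp) / j) :
    gK ∈ Set.Icc (min 0 j) (max 0 j) ∧ gL ∈ Set.Icc (min 0 j) (max 0 j) ∧
    rm = (uK + uL)/2 ∧ rp = (uK + uL)/2 ∧
    fGod rm rp = ((uK + uL)/2)^2 / 2 ∧
    D = j / 24 ∧ D < 0 := by
  have hj_neg : j < 0 := by linarith
  have hrm_mid : rm = (uK + uL) / 2 := by rw [hrm, hgK, hj]; ring
  have hrp_mid : rp = (uK + uL) / 2 := by rw [hrp, hgL, hj]; ring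
  have hD_val : D = j / 24 := by
    rw [hD, hrm_mid, hrp_mid, fEC_sub_fGod_midpoint, ← hj]
    field_simp
  subst hgK hgL
  refine ⟨Set.right_mem_uIcc, Set.right_mem_uIcc, hrm_mid, hrp_mid, ?_, hD_val, ?_⟩
  · rw [hrm_mid, hrp_mid, fGod_self]
  · rw [hD_val]
    linarith
end
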